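/- arXiv:2008.10597 — 2 statements merged into one kernel-verified Lean document; each statement's English description precedes it below -/
import Mathlib

section
/- (Spectral correspondence between the adjacency matrix and the bipartite Coxeter element.) Let Γ be a finite bipartite simple graph with parts O and E and adjacency matrix I. For κ ∈ ℂ, κ is an eigenvalue of I acting on ℂ^V if and only if there exists λ ∈ ℂ, λ ≠ 0, with κ = λ + λ^{−1} such that λ² is an eigenvalue of the linear map s_O ∘ s_E on ℂ^V. -/
open Finset

/-- The reflection `s_a` on `ℂ^V` attached to a vertex `a` of a simple graph `G`:
it sends the basis vector `e_a` to `−e_a` and `e_b` to `e_b + I_{ab}·e_a` for `b ≠ a`,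
where `I` is the adjacency matrix.  In coordinates, `(s_a v)_c = v_c` for `c ≠ a` and
`(s_a v)_a = (∑_b I_{ab} v_b) − v_a`. -/
noncomputable def sRef {V : Type*} [Fintype V] [DecidableEq V]
    (G : SimpleGraph V) [DecidableRel G.Adj] (a : V) (v : V → ℂ) : V → ℂ :=
  fun c => if c = a then (∑ b, if G.Adj a b then v b else 0) - v a else v c

/-- The composition `s_{a₁} ∘ s_{a₂} ∘ … ∘ s_{aₙ}` of reflections along a list
`L = [a₁, …, aₙ]` of vertices (the reflection at the last entry is applied first). -/
noncomputable def compList {V : Type*} [Fintype V] [DecidableEq V]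
    (G : SimpleGraph V) [DecidableRel G.Adj] (L : List V) (v : V → ℂ) : V → ℂ :=
  L.foldr (fun a w => sRef G a w) v

/-!
Since `O` and `E` are independent sets, `s_E` changes only the `E`-coordinates, each by
`w ↦ Aw − w` (with `A` the adjacency matrix), and likewise `s_O`. For `t ≠ 0` and
`κ = t + t⁻¹`, i.e. `κ t = t² + 1`, multiplying the `E`-coordinates of `w` by `t` turns
`s_O s_E w = t² w` into `A u = κ u`: on `E` both say `(Aw)_e = (1 + t²) w_e`, and given this,
on `O` both say `t² (Aw)_o = (1 + t²) w_o`. Every `κ ∈ ℂ` has the form `t + t⁻¹`, with `t` a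
root of `X² − κ X + 1`.
-/

lemma exists_ne_zero_add_inv_eq {K : Type*} [Field K] [IsAlgClosed K] (κ : K) :
    ∃ t ≠ (0 : K), κ = t + t⁻¹ := by
  open Polynomial in
  have hdeg : (X ^ 2 - C κ * X + 1 : K[X]).natDegree = 2 := by compute_degree!
  obtain ⟨t, ht⟩ := IsAlgClosed.exists_root (X ^ 2 - C κ * X + 1)
    (natDegree_pos_iff_degree_pos.1 (by rw [hdeg]; norm_num)).ne'
  have hroot : t ^ 2 - κ * t + 1 = 0 := by simpa using ht
  have ht0 : t ≠ 0 := by rintro rfl; simp at hroot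
  refine ⟨t, ht0, ?_⟩
  field_simp
  linear_combination -hroot

section Piecewise

variable {V K : Type*} [DecidableEq V] [DivisionRing K] (S : Finset V)

lemma Finset.piecewise_smul_self_eq_zero_iff {t : K} (ht : t ≠ 0) {v : V → K} :
    S.piecewise (t • v) v = 0 ↔ v = 0 := by
  refine ⟨fun h => funext fun a => ?_, fun h => by simp [h, Finset.piecewise_same]⟩
  have ha := congrFun h a
  by_cases haS : a ∈ S <;> simp_all

lemma Finset.piecewise_smul_self_piecewise_inv_smul_self {t : K} (ht : t ≠ 0) (v : V → K) :
    S.piecewise (t • S.piecewise (t⁻¹ • v) v) (S.piecewise (t⁻¹ • v) v) = v := by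
  funext a
  by_cases haS : a ∈ S <;> simp [haS, ht]

end Piecewise

namespace SimpleGraph

open Matrix

section Bipartition

variable {V : Type*} {G : SimpleGraph V} {S : Set V}

lemma isIndepSet_of_adj_mem_iff (hS : ∀ a b, G.Adj a b → (a ∈ S ↔ b ∉ S)) :
    G.IsIndepSet S := fun a ha b hb _ hab => (hS a b hab).1 ha hb

lemma isIndepSet_compl_of_adj_mem_iff (hS : ∀ a b, G.Adj a b → (a ∈ S ↔ b ∉ S)) :
    G.IsIndepSet Sᶜ := fun a ha b hb _ hab => hb (not_not.1 fun haS => ha ((hS a b hab).2 haS))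

end Bipartition

variable {V : Type*} [Fintype V] {G : SimpleGraph V} [DecidableRel G.Adj]

lemma sum_ite_adj_eq_adjMatrix_mulVec (v : V → ℂ) (a : V) :
    (∑ b, if G.Adj a b then v b else 0) = (G.adjMatrix ℂ *ᵥ v) a := by
  simp [neighborFinset_eq_filter, Finset.sum_filter]

lemma adjMatrix_mulVec_apply_of_adj {a : V} {t : ℂ} {v w : V → ℂ}
    (h : ∀ b, G.Adj a b → w b = t * v b) :
    (G.adjMatrix ℂ *ᵥ w) a = t * (G.adjMatrix ℂ *ᵥ v) a := by
  simp only [adjMatrix_mulVec_apply, Finset.mul_sum]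
  exact Finset.sum_congr rfl fun b hb => h b ((mem_neighborFinset G a b).1 hb)

lemma adjMatrix_mulVec_apply_congr {a : V} {v w : V → ℂ}
    (h : ∀ b, G.Adj a b → w b = v b) :
    (G.adjMatrix ℂ *ᵥ w) a = (G.adjMatrix ℂ *ᵥ v) a := by
  simpa using adjMatrix_mulVec_apply_of_adj (t := 1) (by simpa using h)

variable [DecidableEq V]

variable (G) in
/-- For an independent set `S`, the product of the reflections `s_a`, `a ∈ S`. -/
noncomputable def reflectOn (S : Finset V) (v : V → ℂ) : V → ℂ :=
  S.piecewise (G.adjMatrix ℂ *ᵥ v - v) v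

lemma reflectOn_apply_of_mem {S : Finset V} {a : V} (ha : a ∈ S) (v : V → ℂ) :
    G.reflectOn S v a = (G.adjMatrix ℂ *ᵥ v) a - v a :=
  Finset.piecewise_eq_of_mem _ _ _ ha

lemma reflectOn_apply_of_notMem {S : Finset V} {a : V} (ha : a ∉ S) (v : V → ℂ) :
    G.reflectOn S v a = v a :=
  Finset.piecewise_eq_of_notMem _ _ _ ha

lemma sRef_eq_update (a : V) (v : V → ℂ) :
    sRef G a v = Function.update v a ((G.adjMatrix ℂ *ᵥ v) a - v a) := by
  funext c
  simp [sRef, Function.update_apply, sum_ite_adj_eq_adjMatrix_mulVec]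

lemma compList_eq_reflectOn {L : List V} (hL : L.Nodup) (hind : G.IsIndepSet {x | x ∈ L}) :
    compList G L = G.reflectOn L.toFinset := by
  induction L with
  | nil => funext v; exact (Finset.piecewise_empty _ _).symm
  | cons a L ih =>
    obtain ⟨haL, hL⟩ := List.nodup_cons.1 hL
    have hind' : G.IsIndepSet {x | x ∈ L} :=
      hind.mono fun x hx => List.mem_cons_of_mem a hx
    have hnbr : ∀ b, G.Adj a b → b ∉ L := fun b hab hbL =>
      hind List.mem_cons_self (List.mem_cons_of_mem a hbL) hab.ne hab
    funext v c
    have hstep : compList G (a :: L) v = sRef G a (compList G L v) := rfl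
    rw [hstep, sRef_eq_update, ih hL hind', Function.update_apply]
    by_cases hca : c = a
    · subst hca
      have hfix : ∀ b, b ∉ L → G.reflectOn L.toFinset v b = v b := fun b hb =>
        reflectOn_apply_of_notMem (List.mem_toFinset.not.2 hb) v
      rw [if_pos rfl, hfix c haL, adjMatrix_mulVec_apply_congr fun b hb => hfix b (hnbr b hb)]
      simp [reflectOn]
    · simp [reflectOn, Finset.piecewise, hca]

variable (G) in
/-- The bipartite Coxeter element `s_O s_E` for the bipartition `V = Eᶜ ⊔ E`. -/
noncomputable def bipartiteCoxeter (E : Finset V) (w : V → ℂ) : V → ℂ :=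
  G.reflectOn Eᶜ (G.reflectOn E w)

lemma bipartiteCoxeter_apply_of_mem {E : Finset V} {a : V} (ha : a ∈ E) (w : V → ℂ) :
    G.bipartiteCoxeter E w a = (G.adjMatrix ℂ *ᵥ w) a - w a := by
  rw [bipartiteCoxeter, reflectOn_apply_of_notMem (Finset.notMem_compl.2 ha),
    reflectOn_apply_of_mem ha]

lemma bipartiteCoxeter_apply_of_notMem {E : Finset V} {a : V} (ha : a ∉ E) (w : V → ℂ) :
    G.bipartiteCoxeter E w a = (G.adjMatrix ℂ *ᵥ G.reflectOn E w) a - w a := by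
  rw [bipartiteCoxeter, reflectOn_apply_of_mem (Finset.mem_compl.2 ha),
    reflectOn_apply_of_notMem ha]

section Eigenvectors

variable {E : Finset V} {t κ : ℂ} {w : V → ℂ}

lemma bipartiteCoxeter_apply_eq_iff_of_mem (hE : ∀ a b, G.Adj a b → (a ∈ E ↔ b ∉ E))
    (hκt : κ * t = t ^ 2 + 1) {a : V} (ha : a ∈ E) :
    G.bipartiteCoxeter E w a = t ^ 2 * w a ↔
      (G.adjMatrix ℂ *ᵥ E.piecewise (t • w) w) a = κ * E.piecewise (t • w) w a := by
  have hAu : (G.adjMatrix ℂ *ᵥ E.piecewise (t • w) w) a = (G.adjMatrix ℂ *ᵥ w) a :=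
    adjMatrix_mulVec_apply_congr fun b hab =>
      Finset.piecewise_eq_of_notMem _ _ _ ((hE a b hab).1 ha)
  rw [bipartiteCoxeter_apply_of_mem ha, hAu, Finset.piecewise_eq_of_mem _ _ _ ha, Pi.smul_apply,
    smul_eq_mul]
  constructor <;> intro h
  · linear_combination h - w a * hκt
  · linear_combination h + w a * hκt

lemma bipartiteCoxeter_apply_eq_iff_of_notMem (hE : ∀ a b, G.Adj a b → (a ∈ E ↔ b ∉ E))
    (ht : t ≠ 0) (hκt : κ * t = t ^ 2 + 1)
    (hcE : ∀ b ∈ E, G.bipartiteCoxeter E w b = t ^ 2 * w b) {a : V} (ha : a ∉ E) :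
    G.bipartiteCoxeter E w a = t ^ 2 * w a ↔
      (G.adjMatrix ℂ *ᵥ E.piecewise (t • w) w) a = κ * E.piecewise (t • w) w a := by
  have hnbr : ∀ b, G.Adj a b → b ∈ E := fun b hab =>
    not_not.1 fun hb => ha ((hE a b hab).2 hb)
  have hAsE : (G.adjMatrix ℂ *ᵥ G.reflectOn E w) a = t ^ 2 * (G.adjMatrix ℂ *ᵥ w) a :=
    adjMatrix_mulVec_apply_of_adj fun b hab =>
      (reflectOn_apply_of_notMem (Finset.notMem_compl.2 (hnbr b hab)) _).symm.trans
        (hcE b (hnbr b hab))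
  have hAu : (G.adjMatrix ℂ *ᵥ E.piecewise (t • w) w) a = t * (G.adjMatrix ℂ *ᵥ w) a :=
    adjMatrix_mulVec_apply_of_adj fun b hab => Finset.piecewise_eq_of_mem _ _ _ (hnbr b hab)
  have hfactor : t ^ 2 * (G.adjMatrix ℂ *ᵥ w) a - w a - t ^ 2 * w a =
      t * (t * (G.adjMatrix ℂ *ᵥ w) a - κ * w a) := by
    linear_combination w a * hκt
  rw [bipartiteCoxeter_apply_of_notMem ha, hAsE, hAu, Finset.piecewise_eq_of_notMem _ _ _ ha,
    ← sub_eq_zero, hfactor, mul_eq_zero, or_iff_right ht, sub_eq_zero]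

theorem bipartiteCoxeter_eq_smul_iff (hE : ∀ a b, G.Adj a b → (a ∈ E ↔ b ∉ E)) (ht : t ≠ 0)
    (hκ : κ = t + t⁻¹) :
    G.bipartiteCoxeter E w = t ^ 2 • w ↔
      G.adjMatrix ℂ *ᵥ E.piecewise (t • w) w = κ • E.piecewise (t • w) w := by
  have hκt : κ * t = t ^ 2 + 1 := by rw [hκ, add_mul, inv_mul_cancel₀ ht]; ring
  simp only [funext_iff, Pi.smul_apply, smul_eq_mul]
  constructor
  · intro hc a
    by_cases ha : a ∈ E
    · exact (bipartiteCoxeter_apply_eq_iff_of_mem hE hκt ha).1 (hc a)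
    · exact (bipartiteCoxeter_apply_eq_iff_of_notMem hE ht hκt (fun b _ => hc b) ha).1 (hc a)
  · intro hu
    have hcE : ∀ b ∈ E, G.bipartiteCoxeter E w b = t ^ 2 * w b := fun b hb =>
      (bipartiteCoxeter_apply_eq_iff_of_mem hE hκt hb).2 (hu b)
    intro a
    by_cases ha : a ∈ E
    · exact hcE a ha
    · exact (bipartiteCoxeter_apply_eq_iff_of_notMem hE ht hκt hcE ha).2 (hu a)

end Eigenvectors

end SimpleGraph

open Matrix SimpleGraph

/-- **Spectral correspondence between the adjacency matrix and the bipartite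
Coxeter element.**  Let `Γ` be a finite bipartite simple graph with parts `O` and `E` and
adjacency matrix `I`.  For `κ ∈ ℂ`, `κ` is an eigenvalue of `I` acting on `ℂ^V` if and
only if there exists `t ∈ ℂ`, `t ≠ 0`, with `κ = t + t⁻¹` such that `t²` is an eigenvalue
of the linear map `s_O ∘ s_E` on `ℂ^V` (with `s_O`, `s_E` the compositions of the
reflections over `O` resp. `E`, well defined since reflections at non-adjacent vertices
commute). -/
theorem adjacency_coxeter_spectral_correspondence {V : Type*} [Fintype V] [DecidableEq V]
    (G : SimpleGraph V) [DecidableRel G.Adj]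
    (O E : Finset V) (hdisj : Disjoint O E) (hcover : ∀ v : V, v ∈ O ∨ v ∈ E)
    (hbip : ∀ a b : V, G.Adj a b → (a ∈ O ∧ b ∈ E) ∨ (a ∈ E ∧ b ∈ O))
    (LO LE : List V) (hLOnd : LO.Nodup) (hLEnd : LE.Nodup)
    (hLO : ∀ x : V, x ∈ LO ↔ x ∈ O) (hLE : ∀ x : V, x ∈ LE ↔ x ∈ E)
    (κ : ℂ) :
    (∃ v : V → ℂ, v ≠ 0 ∧ ∀ a : V, (∑ b, if G.Adj a b then v b else 0) = κ * v a) ↔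
    (∃ t : ℂ, t ≠ 0 ∧ κ = t + t⁻¹ ∧
      ∃ v : V → ℂ, v ≠ 0 ∧ compList G LO (compList G LE v) = fun a => t ^ 2 * v a) := by
  have hOE : ∀ x ∈ O, x ∉ E := fun x hx => Finset.disjoint_left.1 hdisj hx
  have hE : ∀ a b, G.Adj a b → (a ∈ E ↔ b ∉ E) := fun a b hab => by
    rcases hbip a b hab with h | h <;> grind
  have hLO' : ∀ x, x ∈ LO ↔ x ∈ Eᶜ := fun x => by grind [Finset.mem_compl]
  have hcox (v : V → ℂ) : compList G LO (compList G LE v) = G.bipartiteCoxeter E v := by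
    have hindE : G.IsIndepSet (E : Set V) := isIndepSet_of_adj_mem_iff hE
    have hindO : G.IsIndepSet (E : Set V)ᶜ := isIndepSet_compl_of_adj_mem_iff hE
    rw [compList_eq_reflectOn hLOnd (hindO.mono fun x hx => Finset.mem_compl.1 ((hLO' x).1 hx)),
      compList_eq_reflectOn hLEnd (hindE.mono fun x hx => (hLE x).1 hx)]
    congr <;> ext x <;> simp [hLO', hLE]
  have hadj (v : V → ℂ) :
      (∀ a, (∑ b, if G.Adj a b then v b else 0) = κ * v a) ↔ G.adjMatrix ℂ *ᵥ v = κ • v := by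
    simp [funext_iff, sum_ite_adj_eq_adjMatrix_mulVec]
  simp only [hadj, hcox]
  constructor
  · rintro ⟨v, hv0, hv⟩
    obtain ⟨t, ht, hκ⟩ := exists_ne_zero_add_inv_eq κ
    refine ⟨t, ht, hκ, E.piecewise (t⁻¹ • v) v,
      (Finset.piecewise_smul_self_eq_zero_iff E (inv_ne_zero ht)).not.2 hv0, ?_⟩
    exact (bipartiteCoxeter_eq_smul_iff hE ht hκ).2
      (by rwa [Finset.piecewise_smul_self_piecewise_inv_smul_self E ht])
  · rintro ⟨t, ht, hκ, w, hw0, hw⟩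
    exact ⟨E.piecewise (t • w) w, (Finset.piecewise_smul_self_eq_zero_iff E ht).not.2 hw0,
      (bipartiteCoxeter_eq_smul_iff hE ht hκ).1 hw⟩
end

section
/- (Well-definedness of the Coxeter element attached to a height function.) Let Γ be a finite simple graph and let a_1, …, a_n and b_1, …, b_n be two enumerations of the vertex set V such that for every edge {a, b} of Γ, a precedes b in the first enumeration if and only if a precedes b in the second. Then the compositions of reflections coincide: s_{a_1} ∘ s_{a_2} ∘ … ∘ s_{a_n} = s_{b_1} ∘ s_{b_2} ∘ … ∘ s_{b_n} as linear maps on ℂ^V. -/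
/-!
Reflections at distinct non-adjacent vertices commute. Hence, inducting on the first
enumeration, its head `a` can be moved to the front of the second one: every vertex preceding
`a` there is non-adjacent to `a`, since for an edge it would have to follow `a` in both orders.
-/

open Finset

namespace List

variable {α β : Type*}

theorem foldr_append_cons_of_commute (f : α → β → β) {P S : List α} {a : α}
    (h : ∀ p ∈ P, Function.Commute (f p) (f a)) (x : β) :
    (P ++ a :: S).foldr f x = f a ((P ++ S).foldr f x) := by
  induction P with
  | nil => rfl
  | cons p P ih =>
    simp only [cons_append, foldr_cons]
    rw [ih fun q hq => h q (mem_cons_of_mem p hq), h p mem_cons_self]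

variable [DecidableEq α]

theorem idxOf_lt_idxOf_append_cons_iff {P S : List α} {a x y : α} (hx : x ≠ a) (hy : y ≠ a) :
    (P ++ a :: S).idxOf x < (P ++ a :: S).idxOf y ↔ (P ++ S).idxOf x < (P ++ S).idxOf y := by
  have hlt : ∀ z ∈ P, P.idxOf z < P.length := fun z => idxOf_lt_length_iff.2
  by_cases hxP : x ∈ P <;> by_cases hyP : y ∈ P <;>
    simp only [idxOf_append_of_mem, idxOf_append_of_notMem, idxOf_cons_ne _ hx.symm,
      idxOf_cons_ne _ hy.symm, *, not_false_eq_true] <;>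
    grind

theorem foldr_eq_of_perm_of_idxOf_lt_iff (f : α → β → β) {R : α → α → Prop}
    (hcomm : ∀ a b, a ≠ b → ¬ R a b → Function.Commute (f a) (f b))
    {l₁ l₂ : List α} (hnd : l₁.Nodup) (hp : l₂ ~ l₁)
    (hord : ∀ a ∈ l₁, ∀ b ∈ l₁, R a b → (l₁.idxOf a < l₁.idxOf b ↔ l₂.idxOf a < l₂.idxOf b))
    (x : β) : l₁.foldr f x = l₂.foldr f x := by
  induction l₁ generalizing l₂ with
  | nil => rw [perm_nil.1 hp]
  | cons a T ih =>
    obtain ⟨haT, hTnd⟩ := nodup_cons.1 hnd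
    obtain ⟨P, S, rfl⟩ := append_of_mem (hp.mem_iff.2 mem_cons_self)
    have hPS : P ++ S ~ T := (perm_cons a).1 (perm_middle.symm.trans hp)
    have hne : ∀ z ∈ T, z ≠ a := fun z hz h => haT (h ▸ hz)
    have hcommP : ∀ p ∈ P, Function.Commute (f p) (f a) := by
      intro p hpP
      have hpT : p ∈ T := hPS.subset (mem_append_left S hpP)
      refine (hcomm a p (hne p hpT).symm fun hR => ?_).symm
      have hap := (hord a mem_cons_self p (mem_cons_of_mem a hpT) hR).1
        (by simp [idxOf_cons_ne _ (hne p hpT).symm])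
      have haP : a ∉ P := fun h => haT (hPS.subset (mem_append_left S h))
      rw [idxOf_append_of_notMem haP, idxOf_cons_self, idxOf_append_of_mem hpP] at hap
      have := idxOf_lt_length_iff.2 hpP
      omega
    have hordT : ∀ y ∈ T, ∀ z ∈ T, R y z →
        (T.idxOf y < T.idxOf z ↔ (P ++ S).idxOf y < (P ++ S).idxOf z) := by
      intro y hy z hz hR
      have h := hord y (mem_cons_of_mem a hy) z (mem_cons_of_mem a hz) hR
      rwa [idxOf_cons_ne _ (hne y hy).symm, idxOf_cons_ne _ (hne z hz).symm, Nat.succ_lt_succ_iff,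
        idxOf_lt_idxOf_append_cons_iff (hne y hy) (hne z hz)] at h
    rw [foldr_cons, foldr_append_cons_of_commute f hcommP, ih hTnd hPS hordT]

end List

section Reflection

variable {V : Type*} [Fintype V] [DecidableEq V] (G : SimpleGraph V) [DecidableRel G.Adj]

theorem sRef_apply_of_ne {a c : V} (hc : c ≠ a) (v : V → ℂ) : sRef G a v c = v c :=
  if_neg hc

theorem sRef_apply_self (a : V) (v : V → ℂ) :
    sRef G a v a = (∑ b, if G.Adj a b then v b else 0) - v a :=
  if_pos rfl

theorem sum_adj_sRef_of_not_adj {a b : V} (hab : ¬ G.Adj a b) (v : V → ℂ) :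
    (∑ c, if G.Adj a c then sRef G b v c else 0) = ∑ c, if G.Adj a c then v c else 0 :=
  sum_congr rfl fun c _ => by
    split_ifs with hc
    · exact sRef_apply_of_ne G (by rintro rfl; exact hab hc) v
    · rfl

theorem sRef_commute {a b : V} (hne : a ≠ b) (hab : ¬ G.Adj a b) :
    Function.Commute (sRef G a) (sRef G b) := by
  intro v
  funext c
  by_cases hca : c = a
  · subst hca
    rw [sRef_apply_self, sRef_apply_of_ne G hne, sRef_apply_of_ne G hne,
      sum_adj_sRef_of_not_adj G hab, sRef_apply_self]
  by_cases hcb : c = b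
  · subst hcb
    rw [sRef_apply_self, sRef_apply_of_ne G hca, sRef_apply_of_ne G hca,
      sum_adj_sRef_of_not_adj G (fun h => hab h.symm), sRef_apply_self]
  · simp only [sRef_apply_of_ne G hca, sRef_apply_of_ne G hcb]

end Reflection

/-- **Well-definedness of the Coxeter element attached to a height
function.**  Let `Γ` be a finite simple graph and let `a₁, …, aₙ` and `b₁, …, bₙ` be two
enumerations of the vertex set `V` (each lists every vertex exactly once) such that for
every edge `{a, b}` of `Γ`, `a` precedes `b` in the first enumeration iff `a` precedes `b`
in the second.  Then the compositions of the reflections coincide: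
`s_{a₁} ∘ s_{a₂} ∘ … ∘ s_{aₙ} = s_{b₁} ∘ s_{b₂} ∘ … ∘ s_{bₙ}` as linear maps on `ℂ^V`. -/
theorem coxeter_element_well_defined {V : Type*} [Fintype V] [DecidableEq V]
    (G : SimpleGraph V) [DecidableRel G.Adj]
    (L₁ L₂ : List V) (hL₁nd : L₁.Nodup) (hL₂nd : L₂.Nodup)
    (hL₁mem : ∀ v : V, v ∈ L₁) (hL₂mem : ∀ v : V, v ∈ L₂)
    (hprec : ∀ a b : V, G.Adj a b →
      (L₁.idxOf a < L₁.idxOf b ↔ L₂.idxOf a < L₂.idxOf b)) :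
    ∀ v : V → ℂ, compList G L₁ v = compList G L₂ v := by
  have hperm : L₂.Perm L₁ :=
    (List.perm_ext_iff_of_nodup hL₂nd hL₁nd).2 fun x => by simp [hL₁mem x, hL₂mem x]
  exact List.foldr_eq_of_perm_of_idxOf_lt_iff (sRef G) (fun _ _ => sRef_commute G) hL₁nd hperm
    fun a _ b _ hab => hprec a b hab
end
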